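/- Let n ≥ 1 and let a ∈ ℝ^{n+1} be a vector with a₀ > 0 and a₀² − (a₁² + ⋯ + aₙ²) = 1. Then there exists an (n+1)×(n+1) real matrix Ψ satisfying Ψᵀ · η · Ψ = η whose first row equals a, i.e. Ψ₀ⱼ = aⱼ for all j = 0, 1, …, n. -/
import Mathlib


open Matrix

/-- Every future-directed unit timelike vector `a ∈ ℝ^{1,n}` is the first row of
some Lorentz matrix `Ψ` (i.e. `Ψᵀ · η · Ψ = η`). -/
theorem stmt_6 (n : ℕ) (hn : 1 ≤ n) (a : Fin (n + 1) → ℝ)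
    (ha0 : 0 < a 0)
    (ha : (a 0) ^ 2 - ∑ i ∈ Finset.univ.erase 0, (a i) ^ 2 = 1)
    (η : Matrix (Fin (n + 1)) (Fin (n + 1)) ℝ)
    (hη : η = Matrix.diagonal (fun i => if i = 0 then (1 : ℝ) else -1)) :
    ∃ Ψ : Matrix (Fin (n + 1)) (Fin (n + 1)) ℝ,
      Ψᵀ * η * Ψ = η ∧ ∀ j, Ψ 0 j = a j := by
  subst hη
  set c : ℝ := 1 + a 0 with hc
  have hc0 : c ≠ 0 := by positivity
  have hc1 : (1 : ℝ) + a 0 ≠ 0 := by positivity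
  set Ψ : Matrix (Fin (n+1)) (Fin (n+1)) ℝ := fun i j =>
    if i = 0 then a j else if j = 0 then a i
    else (if i = j then 1 else 0) + a i * a j / c with hΨ
  refine ⟨Ψ, ?_, fun j => by simp [hΨ]⟩
  have hS : ∑ k ∈ Finset.univ.erase 0, a k * a k = a 0 * a 0 - 1 := by
    have h := ha
    simp only [sq] at h
    linarith
  ext i j
  rw [Matrix.mul_assoc, Matrix.mul_apply]
  simp only [Matrix.diagonal_mul, Matrix.transpose_apply]
  rw [← Finset.sum_erase_add _ _ (Finset.mem_univ 0)]
  by_cases hi : i = 0 <;> by_cases hj : j = 0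
  · -- i = 0, j = 0
    subst hi hj
    rw [Finset.sum_congr rfl (fun x hx => show Ψ x 0 * ((if x = 0 then (1:ℝ) else -1) * Ψ x 0)
        = -(a x * a x) from by
      have hx0 : x ≠ 0 := Finset.ne_of_mem_erase hx
      simp only [hΨ, if_neg hx0]
      split_ifs <;> (try subst_vars) <;>
      first
      | ring1
      | (field_simp; ring1)
      | contradiction)]
    rw [Finset.sum_neg_distrib, hS]
    simp only [hΨ, Matrix.diagonal_apply, hc]
    split_ifs <;> (try subst_vars) <;>
      first
      | ring1
      | (field_simp; ring1)
      | contradiction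
  · -- i = 0, j ≠ 0
    subst hi
    rw [Finset.sum_congr rfl (fun x hx => show Ψ x 0 * ((if x = 0 then (1:ℝ) else -1) * Ψ x j)
        = (if x = j then -(a j) else 0) + (a x * a x) * (-(a j) / c) from by
      have hx0 : x ≠ 0 := Finset.ne_of_mem_erase hx
      simp only [hΨ, if_neg hx0, if_neg hj]
      split_ifs <;> (try subst_vars) <;>
        first
        | ring1
        | (field_simp; ring1)
        | contradiction)]
    rw [Finset.sum_add_distrib, Finset.sum_ite_eq' _ j, ← Finset.sum_mul, hS,
      if_pos (Finset.mem_erase.2 ⟨hj, Finset.mem_univ j⟩)]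
    simp only [hΨ, Matrix.diagonal_apply, hc]
    split_ifs <;> (try subst_vars) <;>
      first
      | ring1
      | (field_simp; ring1)
      | contradiction
  · -- i ≠ 0, j = 0
    subst hj
    rw [Finset.sum_congr rfl (fun x hx => show Ψ x i * ((if x = 0 then (1:ℝ) else -1) * Ψ x 0)
        = (if x = i then -(a i) else 0) + (a x * a x) * (-(a i) / c) from by
      have hx0 : x ≠ 0 := Finset.ne_of_mem_erase hx
      simp only [hΨ, if_neg hx0, if_neg hi]
      split_ifs <;> (try subst_vars) <;>
        first
        | ring1
        | (field_simp; ring1)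
        | contradiction)]
    rw [Finset.sum_add_distrib, Finset.sum_ite_eq' _ i, ← Finset.sum_mul, hS,
      if_pos (Finset.mem_erase.2 ⟨hi, Finset.mem_univ i⟩)]
    simp only [hΨ, Matrix.diagonal_apply, hc]
    split_ifs <;> (try subst_vars) <;>
      first
      | ring1
      | (field_simp; ring1)
      | contradiction
  · -- i ≠ 0, j ≠ 0
    rw [Finset.sum_congr rfl (fun x hx => show Ψ x i * ((if x = 0 then (1:ℝ) else -1) * Ψ x j)
        = (if x = i then (if i = j then (-1:ℝ) else 0) else 0)
          + (if x = i then -(a x * a j / c) else 0)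
          + (if x = j then -(a x * a i / c) else 0)
          + (a x * a x) * (-(a i * a j) / (c * c)) from by
      have hx0 : x ≠ 0 := Finset.ne_of_mem_erase hx
      simp only [hΨ, if_neg hx0, if_neg hi, if_neg hj]
      split_ifs <;> (try subst_vars) <;>
        first
        | ring1
        | (field_simp; ring1)
        | contradiction)]
    rw [Finset.sum_add_distrib, Finset.sum_add_distrib, Finset.sum_add_distrib,
      Finset.sum_ite_eq' _ i, Finset.sum_ite_eq' _ i, Finset.sum_ite_eq' _ j,
      ← Finset.sum_mul, hS,
      if_pos (Finset.mem_erase.2 ⟨hi, Finset.mem_univ i⟩),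
      if_pos (Finset.mem_erase.2 ⟨hi, Finset.mem_univ i⟩),
      if_pos (Finset.mem_erase.2 ⟨hj, Finset.mem_univ j⟩)]
    simp only [hΨ, Matrix.diagonal_apply, hc]
    split_ifs <;> (try subst_vars) <;>
      first
      | ring1
      | (field_simp; ring1)
      | contradiction
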